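/- Combined conditioning of Theorem 1 for normalized wavelet fields: under the hypotheses of the previous two statements, if additionally the normalization a_j² 2^{−jζ} = cρ holds where ρ = (2π)^{−d} Σ_m ∫_{ℝ^d} |k|^{−ζ}|ψ̂^m(k)|² dk is finite and strictly positive, then there exist constants 0 < A ≤ B < ∞, independent of j, such that A ≤ λ_{φ̄_j}(k) ≤ B for all j ∈ ℤ and k ∈ [−π,π]^d; explicitly A = ρ⁻¹Γ(2π)^{−ζ} and B = (2^d−1)ρ⁻¹Γ'. -/

import Mathlib

open Real

/-! Under the normalization `a_j² 2^{−jζ} = cρ` the scale factor `c a_j⁻² 2^{jζ}` common to the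
scale-wise bounds equals `ρ⁻¹` for every `j`, so both bounds become independent of `j`.
That `A ≤ B` is read off from any single eigenvalue squeezed between them. -/

lemma mul_inv_mul_eq_inv_of_mul_inv_eq {K : Type*} [Field K] {c ρ s t : K}
    (hc : c ≠ 0) (hs : s ≠ 0) (h : t * s⁻¹ = c * ρ) : c * t⁻¹ * s = ρ⁻¹ := by
  rw [mul_inv_eq_iff_eq_mul₀ hs] at h
  rw [h, mul_inv, mul_inv]
  field_simp

lemma rpow_sub_one_mul_mul_rpow_neg {b x : ℝ} (hb : 0 < b) (hx : 0 ≤ x) (s ζ : ℝ) :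
    b ^ ((s - 1) * ζ) * x ^ (-ζ) = b ^ (s * ζ) * (b * x) ^ (-ζ) := by
  rw [mul_rpow hb.le hx, ← mul_assoc, ← rpow_add hb]
  ring_nf

theorem stmt14_general (d : ℕ) (c ζ ρ Γ Γ' : ℝ)
    (hc : 0 < c) (hρ : 0 < ρ) (hΓ : 0 < Γ)
    (a : ℤ → ℝ)
    (lam : ℤ → EuclideanSpace ℝ (Fin d) → ℝ)
    -- lower bound from the coarse-grained field analysis (Statement 12):
    (hlow : ∀ (j : ℤ) (k : EuclideanSpace ℝ (Fin d)), (∀ t, |k t| ≤ Real.pi) →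
      c * ((a j) ^ 2)⁻¹ * (2 : ℝ) ^ (((j : ℝ) - 1) * ζ) * Γ * Real.pi ^ (-ζ) ≤ lam j k)
    -- upper bound via the trace over the 2^d − 1 wavelet channels (Statement 13):
    (hup : ∀ (j : ℤ) (k : EuclideanSpace ℝ (Fin d)), (∀ t, |k t| ≤ Real.pi) →
      lam j k ≤ ((2 : ℝ) ^ d - 1) * c * ((a j) ^ 2)⁻¹ * (2 : ℝ) ^ ((j : ℝ) * ζ) * Γ')
    -- normalization of the wavelet fields:
    (hnorm : ∀ j : ℤ, (a j) ^ 2 * (2 : ℝ) ^ (-(j : ℝ) * ζ) = c * ρ) :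
    ∃ A B : ℝ,
      A = ρ⁻¹ * Γ * (2 * Real.pi) ^ (-ζ) ∧
      B = ((2 : ℝ) ^ d - 1) * ρ⁻¹ * Γ' ∧
      0 < A ∧ A ≤ B ∧
      ∀ (j : ℤ) (k : EuclideanSpace ℝ (Fin d)), (∀ t, |k t| ≤ Real.pi) →
        A ≤ lam j k ∧ lam j k ≤ B := by
  have hscale (j : ℤ) : c * ((a j) ^ 2)⁻¹ * (2 : ℝ) ^ ((j : ℝ) * ζ) = ρ⁻¹ := by
    refine mul_inv_mul_eq_inv_of_mul_inv_eq hc.ne' (rpow_pos_of_pos two_pos _).ne' ?_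
    rw [← rpow_neg zero_le_two, ← neg_mul, hnorm j]
  have hbounds (j : ℤ) (k : EuclideanSpace ℝ (Fin d)) (hk : ∀ t, |k t| ≤ π) :
      ρ⁻¹ * Γ * (2 * π) ^ (-ζ) ≤ lam j k ∧ lam j k ≤ ((2 : ℝ) ^ d - 1) * ρ⁻¹ * Γ' := by
    constructor
    · calc ρ⁻¹ * Γ * (2 * π) ^ (-ζ)
          = c * ((a j) ^ 2)⁻¹ * ((2 : ℝ) ^ (((j : ℝ) - 1) * ζ) * π ^ (-ζ)) * Γ := by
            rw [rpow_sub_one_mul_mul_rpow_neg two_pos pi_pos.le, ← hscale j]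
            ring
        _ = c * ((a j) ^ 2)⁻¹ * (2 : ℝ) ^ (((j : ℝ) - 1) * ζ) * Γ * π ^ (-ζ) := by ring
        _ ≤ lam j k := hlow j k hk
    · calc lam j k ≤ ((2 : ℝ) ^ d - 1) * c * ((a j) ^ 2)⁻¹ * (2 : ℝ) ^ ((j : ℝ) * ζ) * Γ' :=
            hup j k hk
        _ = ((2 : ℝ) ^ d - 1) * ρ⁻¹ * Γ' := by rw [← hscale j]; ring
  have hzero : ∀ t, |(0 : EuclideanSpace ℝ (Fin d)) t| ≤ π := fun _ => by simp [pi_pos.le]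
  refine ⟨_, _, rfl, rfl, by positivity, (hbounds 0 0 hzero).1.trans (hbounds 0 0 hzero).2, hbounds⟩

/-- combined conditioning of Theorem 1 for the normalized wavelet fields:
given the scale-wise lower and upper bounds and the normalization `a_j² 2^{−jζ} = cρ`,
there exist constants `0 < A ≤ B < ∞`, independent of `j`, with `A ≤ λ_{φ̄_j}(k) ≤ B`
for all `j ∈ ℤ` and `k ∈ [−π,π]^d`; explicitly `A = ρ⁻¹ Γ (2π)^{−ζ}` and
`B = (2^d − 1) ρ⁻¹ Γ'`. -/
theorem stmt14 (d : ℕ) (c ζ ρ Γ Γ' : ℝ)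
    (hc : 0 < c) (hζ : 0 < ζ) (hρ : 0 < ρ) (hΓ : 0 < Γ) (hΓ' : 0 < Γ')
    (a : ℤ → ℝ) (ha : ∀ j, 0 < a j)
    (lam : ℤ → EuclideanSpace ℝ (Fin d) → ℝ)
    -- lower bound from the coarse-grained field analysis (Statement 12):
    (hlow : ∀ (j : ℤ) (k : EuclideanSpace ℝ (Fin d)), (∀ t, |k t| ≤ Real.pi) →
      c * ((a j) ^ 2)⁻¹ * (2 : ℝ) ^ (((j : ℝ) - 1) * ζ) * Γ * Real.pi ^ (-ζ) ≤ lam j k)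
    -- upper bound via the trace over the 2^d − 1 wavelet channels (Statement 13):
    (hup : ∀ (j : ℤ) (k : EuclideanSpace ℝ (Fin d)), (∀ t, |k t| ≤ Real.pi) →
      lam j k ≤ ((2 : ℝ) ^ d - 1) * c * ((a j) ^ 2)⁻¹ * (2 : ℝ) ^ ((j : ℝ) * ζ) * Γ')
    -- normalization of the wavelet fields:
    (hnorm : ∀ j : ℤ, (a j) ^ 2 * (2 : ℝ) ^ (-(j : ℝ) * ζ) = c * ρ) :
    ∃ A B : ℝ,
      A = ρ⁻¹ * Γ * (2 * Real.pi) ^ (-ζ) ∧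
      B = ((2 : ℝ) ^ d - 1) * ρ⁻¹ * Γ' ∧
      0 < A ∧ A ≤ B ∧
      ∀ (j : ℤ) (k : EuclideanSpace ℝ (Fin d)), (∀ t, |k t| ≤ Real.pi) →
        A ≤ lam j k ∧ lam j k ≤ B :=
  stmt14_general d c ζ ρ Γ Γ' hc hρ hΓ a lam hlow hup hnorm
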